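/- Let e ≥ 3 be odd, t ≥ 0, and let λ and μ be partitions of the same size n, both with 2-core Δ_t. If the multiset of residues modulo e of the contents of the boxes of τ(λ) equals the multiset of residues modulo e of the contents of the boxes of τ(μ), then λ and μ have the same e-core. -/

import Mathlib

namespace GUnBranching

/-- A partition, given by its (0-indexed) weakly decreasing, eventually zero
sequence of parts: `part k` is the (k+1)-st part `λ_{k+1}`. -/
structure Partition where
  part : ℕ → ℕ
  antitone : ∀ i j : ℕ, i ≤ j → part j ≤ part i
  eventually_zero : ∃ N : ℕ, ∀ n : ℕ, N ≤ n → part n = 0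

namespace Partition

/-- The set of boxes (row, column) (0-indexed) of the Young diagram of a partition. -/
def boxSet (p : Partition) : Set (ℕ × ℕ) := {b | b.2 < p.part b.1}

/-- The size `|λ|` of a partition: the number of boxes of its Young diagram. -/
noncomputable def size (p : Partition) : ℕ := p.boxSet.ncard

/-- The β-set `β(λ) = {λ_k - k + 1 : k ≥ 1}` (0-indexed: `{part k - k : k ∈ ℕ}`). -/
def betaSet (p : Partition) : Set ℤ := {z | ∃ k : ℕ, z = (p.part k : ℤ) - k}

/-- The charged β-set `{λ_k + s - k + 1 : k ≥ 1}` of `(λ, s)`. -/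
def chargedBetaSet (p : Partition) (s : ℤ) : Set ℤ :=
  {z | ∃ k : ℕ, z = (p.part k : ℤ) + s - k}

/-- The number of (nonzero) parts of a partition. -/
noncomputable def length (p : Partition) : ℕ := {k : ℕ | p.part k ≠ 0}.ncard

end Partition

/-- The empty partition `∅`. -/
def emptyPartition : Partition :=
  ⟨fun _ => 0, fun _ _ _ => le_rfl, ⟨0, fun _ _ => rfl⟩⟩

/-- The partition `3^a 2^b 1^c` (a parts equal to 3, b parts equal to 2, c parts equal to 1). -/
def threeTwoOne (a b c : ℕ) : Partition where
  part k := if k < a then 3 else if k < a + b then 2 else if k < a + b + c then 1 else 0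
  antitone i j h := by split_ifs <;> omega
  eventually_zero := ⟨a + b + c, fun n hn => by split_ifs <;> omega⟩

/-- The column partition `1^m`. -/
def column (m : ℕ) : Partition := threeTwoOne 0 0 m

/-- The staircase partition `Δ_t = (t, t-1, …, 2, 1)`. -/
def staircase (t : ℕ) : Partition where
  part k := t - k
  antitone i j h := Nat.sub_le_sub_left h t
  eventually_zero := ⟨t, fun n hn => Nat.sub_eq_zero_of_le hn⟩

/-- The partition `Δ_t ⊔ 1^r` (staircase with a column of `r` extra parts equal to 1). -/
def staircaseColumn (t r : ℕ) : Partition where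
  part k := if k < t then t - k else if k < t + r then 1 else 0
  antitone i j h := by split_ifs <;> omega
  eventually_zero := ⟨t + r, fun n hn => by split_ifs <;> omega⟩

/-- `p ⊔ 1^r` : append `r` extra parts equal to 1 to the partition `p`. -/
noncomputable def appendOnes (p : Partition) (r : ℕ) : Partition where
  part k := max (p.part k) (if k < p.length + r then 1 else 0)
  antitone i j h := max_le_max (p.antitone i j h) (by split_ifs <;> omega)
  eventually_zero := by
    obtain ⟨N, hN⟩ := p.eventually_zero
    refine ⟨max N (p.length + r), fun n hn => ?_⟩
    have h1 : p.part n = 0 := hN n (le_trans (le_max_left _ _) hn)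
    have h2 : ¬ n < p.length + r := by
      have := le_trans (le_max_right N (p.length + r)) hn
      omega
    simp [h1, h2]

/-- `mu` is obtained from `lam` by removing one rim `e`-hook: on β-sets, a bead `x`
with an empty spot at `x - e` is moved to `x - e`. -/
def RemoveHook (e : ℕ) (lam mu : Partition) : Prop :=
  ∃ x : ℤ, x ∈ lam.betaSet ∧ (x - e) ∉ lam.betaSet ∧
    mu.betaSet = insert (x - e) (lam.betaSet \ {x})

/-- A partition is an `e`-core if no rim `e`-hook can be removed from it. -/
def IsECore (e : ℕ) (p : Partition) : Prop := ∀ mu : Partition, ¬ RemoveHook e p mu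

/-- `core` is the `e`-core of `lam`: it is obtained from `lam` by repeatedly removing
rim `e`-hooks, and no further rim `e`-hook can be removed. -/
def HasECore (e : ℕ) (lam core : Partition) : Prop :=
  Relation.ReflTransGen (RemoveHook e) lam core ∧ IsECore e core

/-- `lam` and `mu` have the same `e`-core. -/
def SameECore (e : ℕ) (lam mu : Partition) : Prop :=
  ∃ core : Partition, HasECore e lam core ∧ HasECore e mu core

/-- `(q1, q2)` is the 2-quotient of `lam`: the odd (resp. even) β-numbers of `lam`,
transformed by `v ↦ (v+1)/2` (resp. `v ↦ v/2`), form the β-set of `q1` (resp. `q2`)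
for a suitable charge. -/
def IsTwoQuotient (lam q1 q2 : Partition) : Prop :=
  (∃ c : ℤ, q1.chargedBetaSet c = {z : ℤ | 2 * z - 1 ∈ lam.betaSet}) ∧
  (∃ c : ℤ, q2.chargedBetaSet c = {z : ℤ | 2 * z ∈ lam.betaSet})

/-- The charge `s_t`: `(-(t+1+e)/2, t/2)` for even `t`, `(-(t+1)/2, (t+e)/2)` for odd `t`. -/
def tauCharge (e t : ℕ) : ℤ × ℤ :=
  if t % 2 = 0 then (-(((t : ℤ) + 1 + e) / 2), (t : ℤ) / 2)
  else (-(((t : ℤ) + 1) / 2), ((t : ℤ) + e) / 2)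

/-- `bp` is the twisted 2-quotient `τ(lam)` of `lam`, a partition with 2-core `Δ_t`:
it is the 2-quotient for even `t` and the swapped 2-quotient for odd `t`; the
corresponding charge is `tauCharge e t`. -/
def IsTwistedQuotient (t : ℕ) (lam : Partition) (bp : Partition × Partition) : Prop :=
  HasECore 2 lam (staircase t) ∧
  (if t % 2 = 0 then IsTwoQuotient lam bp.1 bp.2 else IsTwoQuotient lam bp.2 bp.1)

/-- The abacus of a charged bipartition: positions are (column, row) where row
`0 : Fin 2` is the bottom row (first component, charge `s.1`) and row `1 : Fin 2`
the top row (second component, charge `s.2`). -/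
def abacus (bp : Partition × Partition) (s : ℤ × ℤ) : Set (ℤ × Fin 2) :=
  {b | b.1 ∈ (if b.2 = (0 : Fin 2) then bp.1.chargedBetaSet s.1 else bp.2.chargedBetaSet s.2)}

/-- `P` is an `e`-period of the abacus `A`: beads `(x, r 0), (x-1, r 1), …, (x-e+1, r (e-1))`
of `A` where `x` is the largest column containing a bead of `A`, `r i = 0` (bottom row)
whenever `(x - i, bottom)` is a bead of `A` (for `i < e-1`), and once in the bottom row the
period stays in the bottom row. -/
def IsEPeriodOf (e : ℕ) (A P : Set (ℤ × Fin 2)) : Prop :=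
  ∃ (x : ℤ) (r : ℕ → Fin 2),
    P = {b | ∃ i : ℕ, i < e ∧ b = ((x - i : ℤ), r i)} ∧
    (∀ i : ℕ, i < e → ((x - i : ℤ), r i) ∈ A) ∧
    (∀ b ∈ A, b.1 ≤ x) ∧
    (∀ i : ℕ, i + 1 < e → ((x - i : ℤ), (0 : Fin 2)) ∈ A → r i = 0) ∧
    (∀ i : ℕ, i + 1 < e → r i = 0 → r (i + 1) = 0)

/-- `P 0, P 1, P 2, …` is the sequence of `e`-periods of `A`:
each `P k` is the `e`-period of `A` minus the previous periods. -/
def IsPeriodSeq (e : ℕ) (A : Set (ℤ × Fin 2)) (P : ℕ → Set (ℤ × Fin 2)) : Prop :=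
  ∀ k : ℕ, IsEPeriodOf e (A \ ⋃ i ∈ Finset.range k, P i) (P k)

/-- The abacus `A` is totally `e`-periodic: the `k`-th `e`-period exists for every `k`. -/
def TotallyPeriodic (e : ℕ) (A : Set (ℤ × Fin 2)) : Prop :=
  ∃ P : ℕ → Set (ℤ × Fin 2), IsPeriodSeq e A P

/-- `P` is the `(k+1)`-st `e`-period of `A` (so `k = 0` gives the first `e`-period). -/
def IsKthPeriod (e : ℕ) (A : Set (ℤ × Fin 2)) (k : ℕ) (P : Set (ℤ × Fin 2)) : Prop :=
  ∃ Q : ℕ → Set (ℤ × Fin 2),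
    (∀ i : ℕ, i ≤ k → IsEPeriodOf e (A \ ⋃ j ∈ Finset.range i, Q j) (Q i)) ∧ Q k = P

/-- Shift a set of abacus positions one step to the right. -/
def shiftRight (P : Set (ℤ × Fin 2)) : Set (ℤ × Fin 2) := {b | (b.1 - 1, b.2) ∈ P}

/-- Edge of the `sl_∞`-crystal moving the `(k+1)`-st `e`-period one step to the right:
the shifted period must again be the `(k+1)`-st `e`-period of the resulting abacus. -/
def SlInfEdgeAt (e : ℕ) (s : ℤ × ℤ) (k : ℕ) (lam mu : Partition × Partition) : Prop :=
  TotallyPeriodic e (abacus lam s) ∧ TotallyPeriodic e (abacus mu s) ∧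
  ∃ P : Set (ℤ × Fin 2),
    IsKthPeriod e (abacus lam s) k P ∧
    abacus mu s = (abacus lam s \ P) ∪ shiftRight P ∧
    IsKthPeriod e (abacus mu s) k (shiftRight P)

/-- Edge of the `sl_∞`-crystal. -/
def SlInfEdge (e : ℕ) (s : ℤ × ℤ) (lam mu : Partition × Partition) : Prop :=
  ∃ k : ℕ, SlInfEdgeAt e s k lam mu

/-- A source vertex of the `sl_∞`-crystal: a vertex (totally `e`-periodic abacus)
with no incoming edge. -/
def IsSlInfSource (e : ℕ) (s : ℤ × ℤ) (bp : Partition × Partition) : Prop :=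
  TotallyPeriodic e (abacus bp s) ∧ ∀ lam : Partition × Partition, ¬ SlInfEdge e s lam bp

/-- A box of a bipartition: (component, row, column), all 0-indexed
(component `0 : Fin 2` is the first component `λ¹`). -/
abbrev Box := Fin 2 × ℕ × ℕ

/-- The component of a bipartition indexed by `j : Fin 2`. -/
def comp (bp : Partition × Partition) (j : Fin 2) : Partition :=
  if j = 0 then bp.1 else bp.2

/-- `b` is a box of the bipartition `bp`. -/
def IsBoxOf (bp : Partition × Partition) (b : Box) : Prop :=
  b.2.2 < (comp bp b.1).part b.2.1

/-- The (charged) content `ct(b) = y - x + s_j` of a box `b = (j, x, y)`. -/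
def content (s : ℤ × ℤ) (b : Box) : ℤ :=
  (b.2.2 : ℤ) - (b.2.1 : ℤ) + (if b.1 = 0 then s.1 else s.2)

/-- `b` is an addable box of the bipartition `bp`. -/
def IsAddable (bp : Partition × Partition) (b : Box) : Prop :=
  b.2.2 = (comp bp b.1).part b.2.1 ∧
  (b.2.1 = 0 ∨ (comp bp b.1).part b.2.1 < (comp bp b.1).part (b.2.1 - 1))

/-- `b` is a removable box of the bipartition `bp`. -/
def IsRemovable (bp : Partition × Partition) (b : Box) : Prop :=
  b.2.2 + 1 = (comp bp b.1).part b.2.1 ∧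
  (comp bp b.1).part (b.2.1 + 1) < (comp bp b.1).part b.2.1

/-- The total order on addable/removable boxes: `b ≤ b'` iff `b = b'`, or
`ct(b) < ct(b')`, or the contents are equal, `b` lies in the second component and
`b'` in the first. -/
def boxLE (s : ℤ × ℤ) (b b' : Box) : Prop :=
  b = b' ∨ content s b < content s b' ∨
    (content s b = content s b' ∧ b.1 = 1 ∧ b'.1 = 0)

/-- The set of addable or removable boxes of residue `i` (the letters of the `i`-word). -/
def IWord (e : ℕ) (s : ℤ × ℤ) (bp : Partition × Partition) (i : ZMod e) : Set Box :=
  {b | (IsAddable bp b ∨ IsRemovable bp b) ∧ ((content s b : ZMod e) = i)}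

/-- A removable box of residue `i` surviving the Kashiwara cancellation: reading the
`i`-word in increasing order and cancelling each removable box with a following addable
box (recursively cancelling adjacent removable-addable pairs), `b` is not cancelled.
Equivalently, every final segment of the `i`-word starting at `b` contains strictly
more removable than addable boxes. -/
def SurvivingRemovable (e : ℕ) (s : ℤ × ℤ) (bp : Partition × Partition)
    (i : ZMod e) (b : Box) : Prop :=
  b ∈ IWord e s bp i ∧ IsRemovable bp b ∧
  ∀ c ∈ IWord e s bp i, boxLE s b c →
    {d : Box | d ∈ IWord e s bp i ∧ IsAddable bp d ∧ boxLE s b d ∧ boxLE s d c}.ncard <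
    {d : Box | d ∈ IWord e s bp i ∧ IsRemovable bp d ∧ boxLE s b d ∧ boxLE s d c}.ncard

/-- The good removable `i`-box: the smallest removable `i`-box surviving the
Kashiwara cancellation. -/
def IsGoodRemovable (e : ℕ) (s : ℤ × ℤ) (bp : Partition × Partition)
    (i : ZMod e) (b : Box) : Prop :=
  SurvivingRemovable e s bp i b ∧
  ∀ b' : Box, SurvivingRemovable e s bp i b' → boxLE s b b'

/-- An addable box of residue `i` surviving the Kashiwara cancellation. -/
def SurvivingAddable (e : ℕ) (s : ℤ × ℤ) (bp : Partition × Partition)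
    (i : ZMod e) (b : Box) : Prop :=
  b ∈ IWord e s bp i ∧ IsAddable bp b ∧
  ∀ c ∈ IWord e s bp i, boxLE s c b →
    {d : Box | d ∈ IWord e s bp i ∧ IsRemovable bp d ∧ boxLE s c d ∧ boxLE s d b}.ncard <
    {d : Box | d ∈ IWord e s bp i ∧ IsAddable bp d ∧ boxLE s c d ∧ boxLE s d b}.ncard

/-- The good addable `i`-box: the largest addable `i`-box surviving the
Kashiwara cancellation. -/
def IsGoodAddable (e : ℕ) (s : ℤ × ℤ) (bp : Partition × Partition)
    (i : ZMod e) (b : Box) : Prop :=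
  SurvivingAddable e s bp i b ∧
  ∀ b' : Box, SurvivingAddable e s bp i b' → boxLE s b' b

/-- A source vertex of the `ŝl_e`-crystal: no good removable `i`-box for any residue `i`. -/
def IsSlESource (e : ℕ) (s : ℤ × ℤ) (bp : Partition × Partition) : Prop :=
  ∀ (i : ZMod e) (b : Box), ¬ IsGoodRemovable e s bp i b

/-- `bp'` is obtained from `bp` by adding the box `b`. -/
def AddBox (bp : Partition × Partition) (b : Box) (bp' : Partition × Partition) : Prop :=
  if b.1 = 0 then
    bp'.2 = bp.2 ∧ bp'.1.part = Function.update bp.1.part b.2.1 (bp.1.part b.2.1 + 1)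
  else
    bp'.1 = bp.1 ∧ bp'.2.part = Function.update bp.2.part b.2.1 (bp.2.part b.2.1 + 1)

/-- Dominance order: `Dominates mu la` means `la ⊴ mu`. -/
def Dominates (mu la : Partition) : Prop :=
  ∀ k : ℕ, ∑ i ∈ Finset.range k, la.part i ≤ ∑ i ∈ Finset.range k, mu.part i

/-!
On the abacus (β-set) of a partition, removing a rim `e`-hook moves a bead `e` steps down its
runner, so it preserves, for each residue `j` mod `e`, the number of beads of residue `j` above
any deep enough level. The runners of an `e`-core are down-closed, so these numbers determine
the core: it suffices to show that they agree for `λ` and `μ`.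

The odd and the even beads of `λ` are the abacus of the two components of its 2-quotient, with
charges forced by the 2-core `Δ_t`. Telescoping along the rows of a charged partition, the boxes
of content `i - 1` minus the boxes of content `i` count its beads of residue `i` minus those of
the empty partition of the same charge. Since `2` is invertible mod `e`, and the charge `s_t`
shifts the odd half by `-1/2` and the even half by `0` mod `e`, the residue counts of the beads
of `λ` are those of `Δ_t` corrected by the residue counts of the contents of `τ(λ)`, which the
hypothesis makes equal for `λ` and `μ`.
-/

open Set
open Filter (atBot)

/-! ### Beads of partitions -/

noncomputable def countAbove (S : Set ℤ) (a : ℤ) (P : ℤ → Prop) : ℕ :=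
  {x ∈ S | a < x ∧ P x}.ncard

theorem finite_sep_lt_of_bddAbove {S : Set ℤ} (hS : BddAbove S) (a : ℤ) (P : ℤ → Prop) :
    {x ∈ S | a < x ∧ P x}.Finite := by
  obtain ⟨c, hc⟩ := hS
  exact (finite_Ioc a c).subset fun x hx => ⟨hx.2.1, hc hx.1⟩

theorem countAbove_insert_diff {S : Set ℤ} {a x y : ℤ} {P : ℤ → Prop} (hx : x ∈ S)
    (hy : y ∉ S) (hax : a < x) (hay : a < y) (hP : P y ↔ P x) :
    countAbove (insert y (S \ {x})) a P = countAbove S a P := by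
  by_cases hPx : P x
  · have hset : {z ∈ insert y (S \ {x}) | a < z ∧ P z} =
        insert y ({z ∈ S | a < z ∧ P z} \ {x}) := by
      ext z
      simp only [mem_sep_iff, mem_insert_iff, Set.mem_sdiff, mem_singleton_iff]
      constructor
      · rintro ⟨rfl | ⟨hz, hzx⟩, hz'⟩
        exacts [Or.inl rfl, Or.inr ⟨⟨hz, hz'⟩, hzx⟩]
      · rintro (rfl | ⟨⟨hz, hz'⟩, hzx⟩)
        exacts [⟨Or.inl rfl, hay, hP.2 hPx⟩, ⟨Or.inr ⟨hz, hzx⟩, hz'⟩]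
    rw [countAbove, countAbove, hset,
      ncard_exchange (s := {z ∈ S | a < z ∧ P z}) (fun h => hy h.1) ⟨hx, hax, hPx⟩]
  · have hset : {z ∈ insert y (S \ {x}) | a < z ∧ P z} = {z ∈ S | a < z ∧ P z} := by
      ext z
      simp only [mem_sep_iff, mem_insert_iff, Set.mem_sdiff, mem_singleton_iff]
      constructor
      · rintro ⟨rfl | ⟨hz, -⟩, hz'⟩
        exacts [absurd (hP.1 hz'.2) hPx, ⟨hz, hz'⟩]
      · rintro ⟨hz, hz'⟩
        exact ⟨Or.inr ⟨hz, fun h => hPx (h ▸ hz'.2)⟩, hz'⟩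
    rw [countAbove, countAbove, hset]

namespace Partition

theorem strictAnti_beta (p : Partition) (s : ℤ) :
    StrictAnti fun k : ℕ => (p.part k : ℤ) + s - k := by
  intro k l hkl
  have := p.antitone k l hkl.le
  simp only
  omega

theorem chargedBetaSet_eq_range (p : Partition) (s : ℤ) :
    p.chargedBetaSet s = range fun k : ℕ => (p.part k : ℤ) + s - k := by
  ext x
  simp only [chargedBetaSet, mem_ofPred_eq, mem_range, eq_comm]

theorem betaSet_eq_chargedBetaSet_zero (p : Partition) : p.betaSet = p.chargedBetaSet 0 := by
  ext x
  simp only [betaSet, chargedBetaSet, add_zero, mem_ofPred_eq]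

theorem bddAbove_chargedBetaSet (p : Partition) (s : ℤ) : BddAbove (p.chargedBetaSet s) := by
  refine ⟨p.part 0 + s, ?_⟩
  rintro x ⟨k, rfl⟩
  have := p.antitone 0 k k.zero_le
  omega

theorem bddAbove_betaSet (p : Partition) : BddAbove p.betaSet :=
  p.betaSet_eq_chargedBetaSet_zero ▸ p.bddAbove_chargedBetaSet 0

theorem eventually_Iic_subset_chargedBetaSet (p : Partition) (s : ℤ) :
    ∀ᶠ a in atBot, Iic a ⊆ p.chargedBetaSet s := by
  obtain ⟨N, hN⟩ := p.eventually_zero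
  filter_upwards [Filter.eventually_le_atBot (s - N)] with a ha x (hx : x ≤ a)
  exact ⟨(s - x).toNat, by rw [hN _ (by omega)]; omega⟩

theorem eventually_Iic_subset_betaSet (p : Partition) :
    ∀ᶠ a in atBot, Iic a ⊆ p.betaSet :=
  p.betaSet_eq_chargedBetaSet_zero ▸ p.eventually_Iic_subset_chargedBetaSet 0

theorem eventually_Iic_two_mul_subset_betaSet (p : Partition) :
    ∀ᶠ b in atBot, Iic (2 * b) ⊆ p.betaSet :=
  (Filter.tendsto_atBot_atBot.2 fun a => ⟨min a 0, fun b hb => by omega⟩).eventually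
    p.eventually_Iic_subset_betaSet

theorem betaSet_injective : Function.Injective betaSet := by
  intro p q h
  have hrange := congrArg (OrderDual.toDual '' ·) h
  simp only [betaSet_eq_chargedBetaSet_zero, chargedBetaSet_eq_range, ← range_comp] at hrange
  have hfun :=
    ((p.strictAnti_beta 0).dual_right.range_inj (q.strictAnti_beta 0).dual_right).1 hrange
  have hpart : p.part = q.part := funext fun k => by
    have := congrFun hfun k
    simp only [Function.comp_apply, OrderDual.toDual_inj] at this
    omega
  cases p
  cases q
  congr

theorem countAbove_chargedBetaSet_eq_card (p : Partition) {s a : ℤ} {N : ℕ}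
    (hN : ∀ k, N ≤ k → p.part k = 0) (ha : a ≤ s - N) (Q : ℤ → Prop) [DecidablePred Q] :
    countAbove (p.chargedBetaSet s) a Q =
      ((Finset.range (s - a).toNat).filter fun k => Q ((p.part k : ℤ) + s - k)).card := by
  have hset : {x ∈ p.chargedBetaSet s | a < x ∧ Q x} =
      (fun k : ℕ => (p.part k : ℤ) + s - k) ''
        ↑((Finset.range (s - a).toNat).filter fun k => Q ((p.part k : ℤ) + s - k)) := by
    ext x
    simp only [chargedBetaSet, mem_ofPred_eq, Finset.coe_filter,
      Finset.mem_range, mem_image]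
    constructor
    · rintro ⟨⟨k, rfl⟩, hax, hQ⟩
      refine ⟨k, ⟨?_, hQ⟩, rfl⟩
      by_contra hk
      have := hN k (by omega)
      omega
    · rintro ⟨k, ⟨hk, hQ⟩, rfl⟩
      exact ⟨⟨k, rfl⟩, by omega, hQ⟩
  rw [countAbove, hset, ncard_image_of_injective _ (p.strictAnti_beta s).injective,
    ncard_coe_finset]

theorem eventually_countAbove_chargedBetaSet_true (p : Partition) (s : ℤ) :
    ∀ᶠ a in atBot, countAbove (p.chargedBetaSet s) a (fun _ => True) = (s - a).toNat := by
  classical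
  obtain ⟨N, hN⟩ := p.eventually_zero
  filter_upwards [Filter.eventually_le_atBot (s - N)] with a ha
  rw [p.countAbove_chargedBetaSet_eq_card hN ha, Finset.filter_true, Finset.card_range]

end Partition

theorem chargedBetaSet_emptyPartition (s : ℤ) : emptyPartition.chargedBetaSet s = Iic s := by
  ext x
  simp only [Partition.chargedBetaSet, emptyPartition, Nat.cast_zero, zero_add, mem_ofPred_eq,
    mem_Iic]
  exact ⟨fun ⟨k, hk⟩ => by omega, fun hx => ⟨(s - x).toNat, by omega⟩⟩

theorem antitone_add_of_strictAnti {f : ℕ → ℤ} (hf : StrictAnti f) :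
    Antitone fun k : ℕ => f k + k :=
  antitone_nat_of_succ_le fun k => by have := hf (Nat.lt_add_one k); push_cast; omega

namespace Partition

def ofStrictAnti (f : ℕ → ℤ) (hf : StrictAnti f) (N : ℕ)
    (hN : ∀ k, N ≤ k → f k = -k) : Partition where
  part k := (f k + k).toNat
  antitone _ _ hij := Int.toNat_le_toNat (antitone_add_of_strictAnti hf hij)
  eventually_zero := ⟨N, fun k hk => by rw [hN k hk]; simp⟩

theorem betaSet_ofStrictAnti (f : ℕ → ℤ) (hf : StrictAnti f) (N : ℕ)
    (hN : ∀ k, N ≤ k → f k = -k) : (ofStrictAnti f hf N hN).betaSet = range f := by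
  have hnonneg : ∀ k, 0 ≤ f k + k := fun k => by
    have := antitone_add_of_strictAnti hf (le_max_left k N)
    have := hN _ (le_max_right k N)
    simp only at *
    omega
  ext z
  simp only [betaSet, ofStrictAnti, mem_ofPred_eq, mem_range]
  exact exists_congr fun k => by have := hnonneg k; omega

end Partition

theorem exists_betaSet_eq {S : Set ℤ} {a : ℤ} (hS : BddAbove S) (ha : a ≤ 0)
    (hdeep : Iic a ⊆ S) (hcount : countAbove S a (fun _ => True) = (-a).toNat) :
    ∃ p : Partition, p.betaSet = S := by
  obtain ⟨L, rfl⟩ : ∃ L : ℕ, a = -L := ⟨(-a).toNat, by omega⟩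
  have hfin := finite_sep_lt_of_bddAbove hS (-L) fun _ => True
  have hcard : hfin.toFinset.card = L := by
    rw [← ncard_eq_toFinset_card _ hfin]
    simpa [countAbove] using hcount
  set g := hfin.toFinset.orderEmbOfFin hcard
  have hgS : ∀ i, g i ∈ {x ∈ S | -(L : ℤ) < x ∧ True} := fun i =>
    hfin.mem_toFinset.1 (Finset.orderEmbOfFin_mem _ hcard i)
  -- the beads in decreasing order: first the `L` beads above `-L`, then `-L, -L - 1, …`
  let f : ℕ → ℤ := fun k => if hk : k < L then g (Fin.rev ⟨k, hk⟩) else -k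
  have hf : StrictAnti f := by
    intro k l hkl
    simp only [f]
    split_ifs with hl hk hk
    · exact g.strictMono (Fin.rev_lt_rev.2 hkl)
    · omega
    · have := (hgS (Fin.rev ⟨k, hk⟩)).2.1
      omega
    · omega
  refine ⟨Partition.ofStrictAnti f hf L fun k hk => dif_neg (by omega), ?_⟩
  rw [Partition.betaSet_ofStrictAnti]
  refine (range_subset_iff.2 fun k => ?_).antisymm fun z hz => ?_
  · simp only [f]
    split_ifs
    · exact (hgS _).1
    · exact hdeep (by simp only [mem_Iic]; omega)
  · by_cases hLz : -(L : ℤ) < z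
    · obtain ⟨i, rfl⟩ : z ∈ range g := by
        rw [Finset.range_orderEmbOfFin]
        exact hfin.mem_toFinset.2 ⟨hz, hLz, trivial⟩
      exact ⟨i.rev, by simp only [f, dif_pos i.rev.isLt, Fin.eta, Fin.rev_rev]⟩
    · exact ⟨(-z).toNat, by simp only [f]; rw [dif_neg (by omega)]; omega⟩

/-! ### Contents of boxes -/

theorem card_filter_range_add_one_sub (L : ℕ) (m : ℤ) (Q : ℤ → Prop) [DecidablePred Q] :
    (((Finset.range L).filter fun j : ℕ => Q (j + m + 1)).card : ℤ) -
        ((Finset.range L).filter fun j : ℕ => Q (j + m)).card =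
      (if Q (L + m) then 1 else 0) - (if Q m then 1 else 0) := by
  simp only [Finset.card_filter, Nat.cast_sum, Nat.cast_ite, Nat.cast_one, Nat.cast_zero,
    ← Finset.sum_sub_distrib]
  convert Finset.sum_range_sub (fun j : ℕ => if Q (j + m) then (1 : ℤ) else 0) L using 3 <;>
    push_cast <;> ring_nf

namespace Partition

noncomputable def boxCount (p : Partition) (Q : ℤ → Prop) : ℕ :=
  {b ∈ p.boxSet | Q ((b.2 : ℤ) - b.1)}.ncard

theorem boxCount_congr (p : Partition) {P Q : ℤ → Prop} (h : ∀ x, P x ↔ Q x) :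
    p.boxCount P = p.boxCount Q := by
  simp only [funext fun x => propext (h x)]

theorem boxSet_finite (p : Partition) : p.boxSet.Finite := by
  obtain ⟨N, hN⟩ := p.eventually_zero
  refine ((finite_Iio N).prod (finite_Iio (p.part 0))).subset fun b (hb : b.2 < p.part b.1) => ?_
  have := p.antitone 0 b.1 b.1.zero_le
  refine ⟨mem_Iio.2 (not_le.1 fun hk => ?_), mem_Iio.2 (by omega)⟩
  rw [hN _ hk] at hb
  omega

theorem boxCount_eq_sum (p : Partition) {N : ℕ} (hN : ∀ k, N ≤ k → p.part k = 0)
    (Q : ℤ → Prop) [DecidablePred Q] :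
    p.boxCount Q = ∑ k ∈ Finset.range N,
      ((Finset.range (p.part k)).filter fun j : ℕ => Q ((j : ℤ) - k)).card := by
  have hset : {b ∈ p.boxSet | Q ((b.2 : ℤ) - b.1)} =
      ↑((Finset.range N ×ˢ Finset.range (p.part 0)).filter
        fun b => b.2 < p.part b.1 ∧ Q ((b.2 : ℤ) - b.1)) := by
    ext ⟨k, j⟩
    simp only [boxSet, mem_ofPred_eq, Finset.coe_filter, Finset.mem_product,
      Finset.mem_range]
    constructor
    · rintro ⟨hj, hQ⟩
      have h0 := p.antitone 0 k k.zero_le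
      refine ⟨⟨?_, by omega⟩, hj, hQ⟩
      by_contra hk
      have := hN k (by omega)
      omega
    · exact fun ⟨_, hj, hQ⟩ => ⟨hj, hQ⟩
  rw [boxCount, hset, ncard_coe_finset, Finset.card_filter, Finset.sum_product]
  refine Finset.sum_congr rfl fun k _ => ?_
  rw [Finset.card_filter,
    ← Finset.sum_range_add_sum_Ico _ (p.antitone 0 k k.zero_le),
    Finset.sum_eq_zero fun j hj => if_neg fun h => (Finset.mem_Ico.1 hj).1.not_gt h.1, add_zero]
  exact Finset.sum_congr rfl fun j hj => if_congr (and_iff_right (Finset.mem_range.1 hj)) rfl rfl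

theorem eventually_countAbove_sub_countAbove_Iic (p : Partition) (s : ℤ) :
    ∀ᶠ a in atBot, ∀ Q : ℤ → Prop,
      (countAbove (p.chargedBetaSet s) a Q : ℤ) - countAbove (Iic s) a Q =
        (p.boxCount fun x => Q (x + s + 1) : ℤ) - p.boxCount fun x => Q (x + s) := by
  classical
  obtain ⟨N, hN⟩ := p.eventually_zero
  filter_upwards [Filter.eventually_le_atBot (s - N)] with a ha Q
  have hM : ∀ k, (s - a).toNat ≤ k → p.part k = 0 := fun k hk => hN k (by omega)
  rw [p.countAbove_chargedBetaSet_eq_card hN ha, ← chargedBetaSet_emptyPartition,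
    emptyPartition.countAbove_chargedBetaSet_eq_card (N := 0) (fun _ _ => rfl) (by omega),
    p.boxCount_eq_sum hM, p.boxCount_eq_sum hM, Finset.card_filter, Finset.card_filter]
  push_cast
  rw [← Finset.sum_sub_distrib, ← Finset.sum_sub_distrib]
  -- row `k` holds the contents `s - k, …, λ_k + s - k - 1`: shifting them by one telescopes
  -- to the bead `λ_k + s - k` of `p` minus the bead `s - k` of the empty partition
  refine Finset.sum_congr rfl fun k _ => ?_
  have hrow := card_filter_range_add_one_sub (p.part k) (s - k) Q
  have hcontent : ∀ j : ℤ, j - k + s = j + (s - k) := fun j => by ring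
  simp only [emptyPartition, Nat.cast_zero, zero_add, hcontent, ← hrow, add_sub_assoc]

noncomputable def residueCount (e : ℕ) (p : Partition) (s : ℤ) (i : ZMod e) : ℕ :=
  p.boxCount fun x => ((x + s : ℤ) : ZMod e) = i

end Partition

theorem ncard_isBoxOf_content_eq (e : ℕ) (bp : Partition × Partition) (s : ℤ × ℤ)
    (i : ZMod e) :
    {b : Box | IsBoxOf bp b ∧ (content s b : ZMod e) = i}.ncard =
      bp.1.residueCount e s.1 i + bp.2.residueCount e s.2 i := by
  have hset : {b : Box | IsBoxOf bp b ∧ (content s b : ZMod e) = i} =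
      Prod.mk 0 '' {b ∈ bp.1.boxSet | (((b.2 : ℤ) - b.1 + s.1 : ℤ) : ZMod e) = i} ∪
        Prod.mk 1 '' {b ∈ bp.2.boxSet | (((b.2 : ℤ) - b.1 + s.2 : ℤ) : ZMod e) = i} := by
    ext ⟨j, b⟩
    fin_cases j <;> simp [IsBoxOf, comp, content, Partition.boxSet]
  have hdisj : Disjoint
      (Prod.mk (0 : Fin 2) '' {b ∈ bp.1.boxSet | (((b.2 : ℤ) - b.1 + s.1 : ℤ) : ZMod e) = i})
      (Prod.mk 1 '' {b ∈ bp.2.boxSet | (((b.2 : ℤ) - b.1 + s.2 : ℤ) : ZMod e) = i}) := by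
    rw [disjoint_left]
    rintro _ ⟨_, -, rfl⟩ ⟨_, -, h⟩
    simp at h
  rw [hset, ncard_union_eq hdisj ((bp.1.boxSet_finite.subset fun b hb => hb.1).image _)
      ((bp.2.boxSet_finite.subset fun b hb => hb.1).image _),
    ncard_image_of_injective _ (Prod.mk_right_injective 0),
    ncard_image_of_injective _ (Prod.mk_right_injective 1)]
  rfl

/-! ### Rim hooks and cores -/

section Hooks

variable {e : ℕ} {p q : Partition} {a : ℤ}

theorem RemoveHook.exists_of_Iic_subset (h : RemoveHook e p q) (hp : Iic a ⊆ p.betaSet) :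
    ∃ x ∈ p.betaSet, x - e ∉ p.betaSet ∧ a < x - e ∧
      q.betaSet = insert (x - e) (p.betaSet \ {x}) := by
  obtain ⟨x, hx, hxe, hq⟩ := h
  exact ⟨x, hx, hxe, not_le.1 fun hle => hxe (hp hle), hq⟩

theorem RemoveHook.Iic_subset_betaSet (h : RemoveHook e p q) (hp : Iic a ⊆ p.betaSet) :
    Iic a ⊆ q.betaSet := by
  obtain ⟨x, -, -, hax, hq⟩ := h.exists_of_Iic_subset hp
  intro y hy
  rw [hq]
  exact Or.inr ⟨hp hy, fun hyx => by simp_all only [mem_Iic, mem_singleton_iff]; omega⟩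

theorem RemoveHook.countAbove_betaSet (h : RemoveHook e p q) (hp : Iic a ⊆ p.betaSet)
    {P : ℤ → Prop} (hP : ∀ x, P (x - e) ↔ P x) :
    countAbove q.betaSet a P = countAbove p.betaSet a P := by
  obtain ⟨x, hx, hxe, hax, hq⟩ := h.exists_of_Iic_subset hp
  rw [hq, countAbove_insert_diff hx hxe (by omega) hax (hP x)]

theorem Iic_subset_betaSet_of_reflTransGen (h : Relation.ReflTransGen (RemoveHook e) p q)
    (hp : Iic a ⊆ p.betaSet) : Iic a ⊆ q.betaSet := by
  induction h with
  | refl => exact hp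
  | tail _ hqr ih => exact hqr.Iic_subset_betaSet ih

theorem countAbove_betaSet_of_reflTransGen (h : Relation.ReflTransGen (RemoveHook e) p q)
    (hp : Iic a ⊆ p.betaSet) {P : ℤ → Prop} (hP : ∀ x, P (x - e) ↔ P x) :
    countAbove q.betaSet a P = countAbove p.betaSet a P := by
  induction h with
  | refl => rfl
  | tail hpq hqr ih =>
    rw [hqr.countAbove_betaSet (Iic_subset_betaSet_of_reflTransGen hpq hp) hP, ih]

end Hooks

noncomputable def beadWeight (S : Set ℤ) (a : ℤ) : ℕ :=
  ∑ᶠ x ∈ {x ∈ S | a < x}, (x - a).toNat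

theorem beadWeight_insert_diff_add {S : Set ℤ} (hS : BddAbove S) {a x y : ℤ} (hx : x ∈ S)
    (hy : y ∉ S) (hax : a < x) (hay : a < y) :
    beadWeight (insert y (S \ {x})) a + (x - a).toNat = beadWeight S a + (y - a).toNat := by
  set W := {z ∈ S | a < z}
  have hW : W.Finite :=
    (finite_sep_lt_of_bddAbove hS a fun _ => True).subset fun z hz => ⟨hz.1, hz.2, trivial⟩
  have hW' : {z ∈ insert y (S \ {x}) | a < z} = insert y (W \ {x}) := by
    ext z
    simp only [W, mem_sep_iff, mem_insert_iff, Set.mem_sdiff, mem_singleton_iff]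
    constructor
    · rintro ⟨rfl | ⟨hz, hzx⟩, haz⟩
      exacts [Or.inl rfl, Or.inr ⟨⟨hz, haz⟩, hzx⟩]
    · rintro (rfl | ⟨⟨hz, haz⟩, hzx⟩)
      exacts [⟨Or.inl rfl, hay⟩, ⟨Or.inr ⟨hz, hzx⟩, haz⟩]
  have hxW := finsum_mem_insert (fun z => (z - a).toNat)
    (show x ∉ W \ {x} from fun h => h.2 rfl) hW.sdiff
  rw [insert_sdiff_self_of_mem (show x ∈ W from ⟨hx, hax⟩)] at hxW
  rw [beadWeight, beadWeight, hW', finsum_mem_insert _ (fun h => hy h.1.1) hW.sdiff,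
    show {z ∈ S | a < z} = W from rfl, hxW]
  ring

theorem RemoveHook.beadWeight_lt {e : ℕ} {p q : Partition} {a : ℤ} (he : 0 < e)
    (h : RemoveHook e p q) (hp : Iic a ⊆ p.betaSet) :
    beadWeight q.betaSet a < beadWeight p.betaSet a := by
  obtain ⟨x, hx, hxe, hax, hq⟩ := h.exists_of_Iic_subset hp
  have := beadWeight_insert_diff_add p.bddAbove_betaSet hx hxe (by omega) hax
  rw [← hq] at this
  omega

theorem exists_hasECore {e : ℕ} (he : 0 < e) (p : Partition) : ∃ c, HasECore e p c := by
  obtain ⟨a, ha⟩ := p.eventually_Iic_subset_betaSet.exists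
  induction hw : beadWeight p.betaSet a using Nat.strong_induction_on generalizing p with
  | _ n ih =>
    by_cases hp : IsECore e p
    · exact ⟨p, .refl, hp⟩
    · obtain ⟨q, hpq⟩ := not_forall_not.1 hp
      obtain ⟨c, hqc, hc⟩ :=
        ih _ (hw ▸ hpq.beadWeight_lt he ha) q (hpq.Iic_subset_betaSet ha) rfl
      exact ⟨c, .head hpq hqc, hc⟩

section Cores

variable {e : ℕ} {c c₁ c₂ : Partition}

theorem IsECore.sub_mem_betaSet (hc : IsECore e c) {x : ℤ} (hx : x ∈ c.betaSet) :
    x - e ∈ c.betaSet := by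
  by_contra hxe
  obtain ⟨a, hdeep, hcount, hale⟩ := (c.eventually_Iic_subset_betaSet.and
    ((c.eventually_countAbove_chargedBetaSet_true 0).and
      (Filter.eventually_le_atBot (min 0 (x - e - 1))))).exists
  rw [← c.betaSet_eq_chargedBetaSet_zero, zero_sub] at hcount
  have hax : a < x - e := by omega
  obtain ⟨mu, hmu⟩ := exists_betaSet_eq (S := insert (x - e) (c.betaSet \ {x}))
    ((c.bddAbove_betaSet.mono sdiff_subset).insert _) (by omega)
    (fun y hy => Or.inr ⟨hdeep hy, by simp only [mem_Iic, mem_singleton_iff] at hy ⊢; omega⟩)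
    (by rw [countAbove_insert_diff hx hxe (by omega) hax Iff.rfl, hcount])
  exact hc mu ⟨x, hx, hxe, hmu⟩

theorem IsECore.mem_betaSet_of_le (hc : IsECore e c) {x y : ℤ} (hx : x ∈ c.betaSet)
    (hyx : y ≤ x) (hres : (y : ZMod e) = x) : y ∈ c.betaSet := by
  have hsteps : ∀ n : ℕ, x - n * e ∈ c.betaSet := fun n => by
    induction n with
    | zero => simpa using hx
    | succ n ih => simpa [add_mul, sub_add_eq_sub_sub] using hc.sub_mem_betaSet ih
  obtain ⟨k, hk⟩ := (ZMod.intCast_eq_intCast_iff_dvd_sub y x e).1 hres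
  rcases e.eq_zero_or_pos with rfl | he
  · simp only [Nat.cast_zero, zero_mul] at hk
    rwa [show y = x by omega]
  · have hk0 : 0 ≤ k := by
      by_contra hneg
      nlinarith
    convert hsteps k.toNat using 1
    rw [Int.toNat_of_nonneg hk0]
    linarith

theorem IsECore.betaSet_subset (h₁ : IsECore e c₁) (h₂ : IsECore e c₂) {a : ℤ}
    (ha : Iic a ⊆ c₂.betaSet)
    (hcount : ∀ j : ZMod e, countAbove c₁.betaSet a (fun x => (x : ZMod e) = j) ≤
      countAbove c₂.betaSet a (fun x => (x : ZMod e) = j)) :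
    c₁.betaSet ⊆ c₂.betaSet := by
  intro x hx
  by_contra hx₂
  have hax : a < x := not_le.1 fun hle => hx₂ (ha hle)
  -- the runner of `x` is down-closed in both cores, and it contains `x` only in `c₁`
  have hssub : {y ∈ c₂.betaSet | a < y ∧ (y : ZMod e) = x} ⊂
      {y ∈ c₁.betaSet | a < y ∧ (y : ZMod e) = x} := by
    refine ssubset_iff_subset_ne.2
      ⟨fun y ⟨hy, hay, hres⟩ => ⟨?_, hay, hres⟩, fun heq => ?_⟩
    · rcases le_or_gt y x with hyx | hxy
      · exact h₁.mem_betaSet_of_le hx hyx hres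
      · exact absurd (h₂.mem_betaSet_of_le hy hxy.le hres.symm) hx₂
    · have : x ∈ {y ∈ c₁.betaSet | a < y ∧ (y : ZMod e) = x} := ⟨hx, hax, rfl⟩
      exact hx₂ (heq ▸ this).1
  exact (ncard_lt_ncard hssub (finite_sep_lt_of_bddAbove c₁.bddAbove_betaSet a _)).not_ge
    (hcount x)

theorem IsECore.eq_of_countAbove_eq (h₁ : IsECore e c₁) (h₂ : IsECore e c₂) {a : ℤ}
    (ha₁ : Iic a ⊆ c₁.betaSet) (ha₂ : Iic a ⊆ c₂.betaSet)
    (hcount : ∀ j : ZMod e, countAbove c₁.betaSet a (fun x => (x : ZMod e) = j) =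
      countAbove c₂.betaSet a (fun x => (x : ZMod e) = j)) :
    c₁ = c₂ :=
  Partition.betaSet_injective <| (h₁.betaSet_subset h₂ ha₂ fun j => (hcount j).le).antisymm
    (h₂.betaSet_subset h₁ ha₁ fun j => (hcount j).ge)

end Cores

theorem sameECore_of_countAbove_eq {e : ℕ} (he : 0 < e) {lam mu : Partition} {a : ℤ}
    (hl : Iic a ⊆ lam.betaSet) (hm : Iic a ⊆ mu.betaSet)
    (hcount : ∀ j : ZMod e, countAbove lam.betaSet a (fun x => (x : ZMod e) = j) =
      countAbove mu.betaSet a (fun x => (x : ZMod e) = j)) :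
    SameECore e lam mu := by
  obtain ⟨cl, hlcl, hcl⟩ := exists_hasECore he lam
  obtain ⟨cm, hmcm, hcm⟩ := exists_hasECore he mu
  have hperiodic (j : ZMod e) (x : ℤ) : ((x - e : ℤ) : ZMod e) = j ↔ (x : ZMod e) = j := by
    simp
  have hcore : cl = cm := hcl.eq_of_countAbove_eq hcm (Iic_subset_betaSet_of_reflTransGen hlcl hl)
    (Iic_subset_betaSet_of_reflTransGen hmcm hm) fun j => by
      rw [countAbove_betaSet_of_reflTransGen hlcl hl (hperiodic j),
        countAbove_betaSet_of_reflTransGen hmcm hm (hperiodic j), hcount]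
  exact ⟨cl, ⟨hlcl, hcl⟩, hcore ▸ ⟨hmcm, hcm⟩⟩

/-! ### Two-quotients -/

def oddHalf (S : Set ℤ) : Set ℤ := {z | 2 * z - 1 ∈ S}

def evenHalf (S : Set ℤ) : Set ℤ := {z | 2 * z ∈ S}

theorem countAbove_two_mul {S : Set ℤ} (hS : BddAbove S) (b : ℤ) (P : ℤ → Prop) :
    countAbove S (2 * b) P = countAbove (oddHalf S) b (fun z => P (2 * z - 1)) +
      countAbove (evenHalf S) b (fun z => P (2 * z)) := by
  have hsplit : {x ∈ S | 2 * b < x ∧ P x} =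
      (fun z => 2 * z - 1) '' {z ∈ oddHalf S | b < z ∧ P (2 * z - 1)} ∪
        (fun z => 2 * z) '' {z ∈ evenHalf S | b < z ∧ P (2 * z)} := by
    ext x
    simp only [oddHalf, evenHalf, mem_union, mem_image, mem_ofPred_eq]
    constructor
    · rintro ⟨hx, hbx, hP⟩
      obtain ⟨z, rfl | rfl⟩ : ∃ z, x = 2 * z - 1 ∨ x = 2 * z := ⟨(x + 1) / 2, by omega⟩
      exacts [Or.inl ⟨z, ⟨hx, by omega, hP⟩, rfl⟩,
        Or.inr ⟨z, ⟨hx, by omega, hP⟩, rfl⟩]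
    · rintro (⟨z, ⟨hz, hbz, hP⟩, rfl⟩ | ⟨z, ⟨hz, hbz, hP⟩, rfl⟩)
      exacts [⟨hz, by omega, hP⟩, ⟨hz, by omega, hP⟩]
  have hdisj : Disjoint ((fun z => 2 * z - 1) '' {z ∈ oddHalf S | b < z ∧ P (2 * z - 1)})
      ((fun z => 2 * z) '' {z ∈ evenHalf S | b < z ∧ P (2 * z)}) := by
    rw [disjoint_left]
    rintro _ ⟨z, -, rfl⟩ ⟨w, -, h⟩
    simp only at h
    omega
  have hfin := finite_sep_lt_of_bddAbove hS (2 * b) P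
  rw [hsplit] at hfin
  rw [countAbove, hsplit, ncard_union_eq hdisj (hfin.subset subset_union_left)
      (hfin.subset subset_union_right),
    ncard_image_of_injective _ fun z w (h : 2 * z - 1 = 2 * w - 1) => by omega,
    ncard_image_of_injective _ fun z w (h : 2 * z = 2 * w) => by omega, countAbove, countAbove]

theorem countAbove_oddHalf {S : Set ℤ} (hS : BddAbove S) (b : ℤ) :
    countAbove (oddHalf S) b (fun _ => True) = countAbove S (2 * b) Odd := by
  rw [countAbove_two_mul hS]
  simp [countAbove, parity_simps, ← Int.not_even_iff_odd]

theorem countAbove_evenHalf {S : Set ℤ} (hS : BddAbove S) (b : ℤ) :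
    countAbove (evenHalf S) b (fun _ => True) = countAbove S (2 * b) Even := by
  rw [countAbove_two_mul hS]
  simp [countAbove, parity_simps, ← Int.not_even_iff_odd]

theorem mem_betaSet_staircase (t : ℕ) (x : ℤ) :
    x ∈ (staircase t).betaSet ↔
      x ≤ -(t : ℤ) ∨ (-(t : ℤ) ≤ x ∧ x ≤ t ∧ (x + t) % 2 = 0) := by
  constructor
  · rintro ⟨k, rfl⟩
    simp only [staircase]
    omega
  · rintro (hx | ⟨hx, hx', hpar⟩)
    · exact ⟨(-x).toNat, by simp only [staircase]; omega⟩
    · exact ⟨((t - x) / 2).toNat, by simp only [staircase]; omega⟩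

def staircaseHalfCharge (t : ℕ) : ℤ × ℤ :=
  if t % 2 = 0 then (-((t : ℤ) / 2), (t : ℤ) / 2)
  else (((t : ℤ) + 1) / 2, -(((t : ℤ) + 1) / 2))

theorem oddHalf_betaSet_staircase (t : ℕ) :
    oddHalf (staircase t).betaSet = Iic (staircaseHalfCharge t).1 := by
  ext z
  simp only [oddHalf, staircaseHalfCharge, mem_ofPred_eq, mem_betaSet_staircase, mem_Iic]
  split_ifs <;> omega

theorem evenHalf_betaSet_staircase (t : ℕ) :
    evenHalf (staircase t).betaSet = Iic (staircaseHalfCharge t).2 := by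
  ext z
  simp only [evenHalf, staircaseHalfCharge, mem_ofPred_eq, mem_betaSet_staircase, mem_Iic]
  split_ifs <;> omega

theorem Partition.charge_eq_of_chargedBetaSet_eq {q : Partition} {c v : ℤ} {S : Set ℤ}
    (hq : q.chargedBetaSet c = S)
    (hS : ∀ᶠ b in atBot,
      countAbove S b (fun _ => True) = countAbove (Iic v) b (fun _ => True)) :
    c = v := by
  obtain ⟨b, hqb, hvb, hSb, hb⟩ := ((q.eventually_countAbove_chargedBetaSet_true c).and
    ((emptyPartition.eventually_countAbove_chargedBetaSet_true v).and
      (hS.and (Filter.eventually_le_atBot (min c v))))).exists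
  rw [chargedBetaSet_emptyPartition] at hvb
  rw [hq, hSb, hvb] at hqb
  omega

theorem IsTwoQuotient.chargedBetaSet_staircaseHalfCharge {lam q₁ q₂ : Partition} {t : ℕ}
    (hcore : HasECore 2 lam (staircase t)) (hq : IsTwoQuotient lam q₁ q₂) :
    q₁.chargedBetaSet (staircaseHalfCharge t).1 = oddHalf lam.betaSet ∧
      q₂.chargedBetaSet (staircaseHalfCharge t).2 = evenHalf lam.betaSet := by
  obtain ⟨⟨c₁, h₁ : _ = oddHalf _⟩, ⟨c₂, h₂ : _ = evenHalf _⟩⟩ := hq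
  have hdeep := lam.eventually_Iic_two_mul_subset_betaSet
  have hc₁ : c₁ = (staircaseHalfCharge t).1 := q₁.charge_eq_of_chargedBetaSet_eq h₁ <| by
    filter_upwards [hdeep] with b hb
    rw [← oddHalf_betaSet_staircase, countAbove_oddHalf lam.bddAbove_betaSet,
      countAbove_oddHalf (staircase t).bddAbove_betaSet,
      countAbove_betaSet_of_reflTransGen hcore.1 hb (by simp [parity_simps])]
  have hc₂ : c₂ = (staircaseHalfCharge t).2 := q₂.charge_eq_of_chargedBetaSet_eq h₂ <| by
    filter_upwards [hdeep] with b hb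
    rw [← evenHalf_betaSet_staircase, countAbove_evenHalf lam.bddAbove_betaSet,
      countAbove_evenHalf (staircase t).bddAbove_betaSet,
      countAbove_betaSet_of_reflTransGen hcore.1 hb (by simp [parity_simps])]
  exact ⟨hc₁ ▸ h₁, hc₂ ▸ h₂⟩

-- For the half `{z | 2 z - r ∈ β}` of an abacus (`r = 1`: odd, `r = 0`: even beads). By `hs`,
-- a box of content `x` for the charge `v` has `2 (x + v) - r ≡ 2 (x + s)` mod `e`.
theorem Partition.eventually_countAbove_add_residueCount {e : ℕ} {u : ZMod e} (hu : 2 * u = 1)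
    (q : Partition) {v s r : ℤ} (hs : 2 * (s - v) ≡ -r [ZMOD e]) :
    ∀ᶠ b in atBot, ∀ j : ZMod e,
      countAbove (q.chargedBetaSet v) b (fun z => ((2 * z - r : ℤ) : ZMod e) = j) +
          q.residueCount e s (u * j) =
        countAbove (Iic v) b (fun z => ((2 * z - r : ℤ) : ZMod e) = j) +
          q.residueCount e s (u * j - 1) := by
  have hs' : (2 : ZMod e) * (s - v) = -r := by
    simpa using (ZMod.intCast_eq_intCast_iff _ _ _).2 hs
  have halve (y j : ZMod e) : 2 * y = j ↔ y = u * j :=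
    ⟨fun h => by rw [← h, ← mul_assoc, mul_comm u, hu, one_mul],
      fun h => by rw [h, ← mul_assoc, hu, one_mul]⟩
  filter_upwards [q.eventually_countAbove_sub_countAbove_Iic v] with b hb j
  have hcount := hb fun z => ((2 * z - r : ℤ) : ZMod e) = j
  have h₁ : (q.boxCount fun x => ((2 * (x + v + 1) - r : ℤ) : ZMod e) = j) =
      q.residueCount e s (u * j - 1) := q.boxCount_congr fun x => by
    push_cast
    rw [show (2 : ZMod e) * (x + v + 1) - r = 2 * (x + s + 1) by linear_combination -hs',
      halve, eq_sub_iff_add_eq]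
  have h₀ : (q.boxCount fun x => ((2 * (x + v) - r : ℤ) : ZMod e) = j) =
      q.residueCount e s (u * j) := q.boxCount_congr fun x => by
    push_cast
    rw [show (2 : ZMod e) * (x + v) - r = 2 * (x + s) by linear_combination -hs', halve]
  rw [h₁, h₀] at hcount
  omega

theorem eventually_countAbove_betaSet_add_residueCount {e : ℕ} {u : ZMod e} (hu : 2 * u = 1)
    {lam qO qE : Partition} {vO vE sO sE : ℤ} (hO : qO.chargedBetaSet vO = oddHalf lam.betaSet)
    (hE : qE.chargedBetaSet vE = evenHalf lam.betaSet) (hsO : 2 * (sO - vO) ≡ -1 [ZMOD e])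
    (hsE : 2 * (sE - vE) ≡ 0 [ZMOD e]) :
    ∀ᶠ b in atBot, Iic (2 * b) ⊆ lam.betaSet ∧ ∀ j : ZMod e,
      countAbove lam.betaSet (2 * b) (fun x => (x : ZMod e) = j) +
          (qO.residueCount e sO (u * j) + qE.residueCount e sE (u * j)) =
        countAbove (Iic vO) b (fun z => ((2 * z - 1 : ℤ) : ZMod e) = j) +
          countAbove (Iic vE) b (fun z => ((2 * z : ℤ) : ZMod e) = j) +
          (qO.residueCount e sO (u * j - 1) + qE.residueCount e sE (u * j - 1)) := by
  filter_upwards [lam.eventually_Iic_two_mul_subset_betaSet,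
    qO.eventually_countAbove_add_residueCount hu (r := 1) hsO,
    qE.eventually_countAbove_add_residueCount hu (r := 0) (by rwa [neg_zero])]
    with b hb hodd heven
  refine ⟨hb, fun j => ?_⟩
  have hsplit := countAbove_two_mul lam.bddAbove_betaSet b fun x => (x : ZMod e) = j
  have hodd := hodd j
  have heven := heven j
  simp only [sub_zero] at heven
  rw [hO] at hodd
  rw [hE] at heven
  omega

/-- The charges of the components of `τ(λ)` that come from the odd and from the even half of
the abacus of `λ`, in this order. -/
def tauHalfCharge (e t : ℕ) : ℤ × ℤ :=
  if t % 2 = 0 then tauCharge e t else (tauCharge e t).swap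

theorem two_mul_tauHalfCharge_fst_sub_modEq {e : ℕ} (he : Odd e) (t : ℕ) :
    2 * ((tauHalfCharge e t).1 - (staircaseHalfCharge t).1) ≡ -1 [ZMOD e] := by
  obtain ⟨w, rfl⟩ := he
  unfold tauHalfCharge tauCharge staircaseHalfCharge
  split_ifs
  · exact Int.modEq_iff_dvd.2 ⟨1, by push_cast; omega⟩
  · exact Int.modEq_iff_dvd.2 ⟨-1, by simp only [Prod.fst_swap]; push_cast; omega⟩

theorem tauHalfCharge_snd (e t : ℕ) : (tauHalfCharge e t).2 = (staircaseHalfCharge t).2 := by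
  unfold tauHalfCharge tauCharge staircaseHalfCharge
  split_ifs <;> rfl

theorem IsTwistedQuotient.exists_halves {e t : ℕ} {lam : Partition} {bp : Partition × Partition}
    (h : IsTwistedQuotient t lam bp) :
    ∃ qO qE : Partition, qO.chargedBetaSet (staircaseHalfCharge t).1 = oddHalf lam.betaSet ∧
      qE.chargedBetaSet (staircaseHalfCharge t).2 = evenHalf lam.betaSet ∧
      ∀ i : ZMod e, {b : Box | IsBoxOf bp b ∧ (content (tauCharge e t) b : ZMod e) = i}.ncard =
        qO.residueCount e (tauHalfCharge e t).1 i + qE.residueCount e (tauHalfCharge e t).2 i := by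
  obtain ⟨hcore, hq⟩ := h
  unfold tauHalfCharge
  split_ifs at hq ⊢
  · obtain ⟨hO, hE⟩ := hq.chargedBetaSet_staircaseHalfCharge hcore
    exact ⟨bp.1, bp.2, hO, hE, ncard_isBoxOf_content_eq e bp _⟩
  · obtain ⟨hO, hE⟩ := hq.chargedBetaSet_staircaseHalfCharge hcore
    exact ⟨bp.2, bp.1, hO, hE,
      fun i => (ncard_isBoxOf_content_eq e bp _ i).trans (add_comm _ _)⟩

theorem same_combinatorial_block_same_ecore_general
    (e t : ℕ) (he : Odd e)
    (lam mu : Partition)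
    (bl bm : Partition × Partition)
    (htl : IsTwistedQuotient t lam bl) (htm : IsTwistedQuotient t mu bm)
    (h : ∀ i : ZMod e,
      {b : Box | IsBoxOf bl b ∧ (content (tauCharge e t) b : ZMod e) = i}.ncard =
      {b : Box | IsBoxOf bm b ∧ (content (tauCharge e t) b : ZMod e) = i}.ncard) :
    SameECore e lam mu := by
  obtain ⟨u, hu⟩ :=
    ((ZMod.isUnit_iff_coprime 2 e).2 (Nat.coprime_two_left.2 he)).exists_right_inv
  rw [Nat.cast_ofNat] at hu
  have hsO := two_mul_tauHalfCharge_fst_sub_modEq he t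
  have hsE : 2 * ((tauHalfCharge e t).2 - (staircaseHalfCharge t).2) ≡ 0 [ZMOD e] := by
    rw [tauHalfCharge_snd, sub_self, mul_zero]
  obtain ⟨ql, ql', hlO, hlE, hlbox⟩ := htl.exists_halves (e := e)
  obtain ⟨qm, qm', hmO, hmE, hmbox⟩ := htm.exists_halves (e := e)
  obtain ⟨b, ⟨hlb, hlcount⟩, hmb, hmcount⟩ :=
    ((eventually_countAbove_betaSet_add_residueCount hu hlO hlE hsO hsE).and
      (eventually_countAbove_betaSet_add_residueCount hu hmO hmE hsO hsE)).exists
  refine sameECore_of_countAbove_eq he.pos hlb hmb fun j => ?_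
  have h₀ := h (u * j)
  have h₁ := h (u * j - 1)
  rw [hlbox, hmbox] at h₀ h₁
  have := hlcount j
  have := hmcount j
  omega

/-- If `λ, μ` are partitions of the same size `n` with the same 2-core
`Δ_t`, and the multisets of residues mod `e` of the contents of the boxes of `τ(λ)` and
`τ(μ)` agree, then `λ` and `μ` have the same `e`-core. -/
theorem same_combinatorial_block_same_ecore
    (e t n : ℕ) (he : Odd e) (he3 : 3 ≤ e)
    (lam mu : Partition) (hl : lam.size = n) (hm : mu.size = n)
    (bl bm : Partition × Partition)
    (htl : IsTwistedQuotient t lam bl) (htm : IsTwistedQuotient t mu bm)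
    (h : ∀ i : ZMod e,
      {b : Box | IsBoxOf bl b ∧ (content (tauCharge e t) b : ZMod e) = i}.ncard =
      {b : Box | IsBoxOf bm b ∧ (content (tauCharge e t) b : ZMod e) = i}.ncard) :
    SameECore e lam mu :=
  same_combinatorial_block_same_ecore_general e t he lam mu bl bm htl htm h

end GUnBranching
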